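/- (Corollary 1, semi-supervised likelihood) Under SBM(n,r,p,q), condition on the modified adjacency matrix M and on the labels X_L of a fixed subset L of k nodes. Then for any two labelings X_U, Y_U ∈ Δ_r^{n-k} of the remaining nodes, ℙ[X_U | M, X_L] / ℙ[Y_U | M, X_L] = exp( ((r-1)/(2r)) ( Tr([X_U; X_L]^T M [X_U; X_L]) − Tr([Y_U; X_L]^T M [Y_U; X_L]) ) ), where [X_U; X_L] denotes the full n×d vector-label matrix combining unsupervised and supervised labels. -/

import Mathlib

open Matrix

/-- SBM likelihood of the graph given a full labeling (product over unordered pairs). -/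
noncomputable def SBMlikelihood (n r : ℕ) (p q : ℝ) (G : Fin n → Fin n → Prop)
    [DecidableRel G] (σ : Fin n → Fin r) : ℝ :=
  ∏ i : Fin n, ∏ j : Fin n,
    if i < j then
      (if G i j then (if σ i = σ j then p else q)
       else (if σ i = σ j then 1 - p else 1 - q))
    else 1

/-- Semi-supervised posterior of the unsupervised labeling σU given the graph and the
supervised labels σL (with the first m nodes unsupervised and the last k supervised;
the uniform prior on σU cancels in the normalization). -/
noncomputable def condPosterior (m k r : ℕ) (p q : ℝ)
    (G : Fin (m + k) → Fin (m + k) → Prop) [DecidableRel G]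
    (σL : Fin k → Fin r) (σU : Fin m → Fin r) : ℝ :=
  SBMlikelihood (m + k) r p q G (Fin.append σU σL) /
    ∑ τU : Fin m → Fin r, SBMlikelihood (m + k) r p q G (Fin.append τU σL)

/-!
The normaliser of the posterior does not depend on the unsupervised labels, so the posterior
ratio is a likelihood ratio. Pair by pair, the SBM likelihood is the Erdős–Rényi likelihood
with edge probability `q` (`SBMlikelihood` at `p = q`, which ignores the labels) times
`exp (M i j)` whenever `i < j` share a label; so likelihood ratios are `exp` of differences of
`∑_{i < j, σ i = σ j} M i j`. On the other side, the simplex vertices have Gram matrix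
`(r δ - 1) / (r - 1)`, so `(r - 1) Tr(Zᵀ M Z) = 2 r ∑_{i < j, σ i = σ j} M i j - ∑ M` for
symmetric `M` with zero diagonal; multiplying by `1 / (2 r)` and subtracting gives the theorem.
-/

open Finset

section SymmetricSums

variable {ι : Type*} [Fintype ι] [LinearOrder ι]

theorem sum_sum_eq_two_mul_sum_sum_lt {R : Type*} [NonAssocSemiring R] (F : ι → ι → R)
    (hsymm : ∀ a b, F a b = F b a) (hdiag : ∀ a, F a a = 0) :
    ∑ a, ∑ b, F a b = 2 * ∑ a, ∑ b, if a < b then F a b else 0 := by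
  have hsplit : ∀ a b, F a b = (if a < b then F a b else 0) + (if b < a then F b a else 0) := by
    intro a b
    rcases lt_trichotomy a b with h | rfl | h
    · simp [h, h.not_gt]
    · simp [hdiag]
    · simp [h, h.not_gt, hsymm a b]
  calc ∑ a, ∑ b, F a b
      = ∑ a, ∑ b, ((if a < b then F a b else 0) + (if b < a then F b a else 0)) :=
        sum_congr rfl fun a _ => sum_congr rfl fun b _ => hsplit a b
    _ = (∑ a, ∑ b, if a < b then F a b else 0) + ∑ a, ∑ b, if b < a then F b a else 0 := by
        simp only [sum_add_distrib]
    _ = 2 * ∑ a, ∑ b, if a < b then F a b else 0 := by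
        rw [sum_comm (f := fun a b => if b < a then F b a else 0), two_mul]

noncomputable def sameLabelPairSum {α : Type*} [DecidableEq α] (M : Matrix ι ι ℝ) (σ : ι → α) :
    ℝ :=
  ∑ i, ∑ j, if i < j ∧ σ i = σ j then M i j else 0

theorem sum_sum_ite_eq_two_mul_sameLabelPairSum {α : Type*} [DecidableEq α]
    {M : Matrix ι ι ℝ} (hM : M.IsSymm) (hdiag : ∀ i, M i i = 0) (σ : ι → α) :
    ∑ a, ∑ b, (if σ a = σ b then M a b else 0) = 2 * sameLabelPairSum M σ := by
  rw [sum_sum_eq_two_mul_sum_sum_lt]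
  · simp only [sameLabelPairSum, ite_and]
  · intro a b
    simp only [eq_comm (a := σ a), hM.apply a b]
  · simp [hdiag]

end SymmetricSums

theorem Matrix.trace_transpose_mul_mul_eq_sum {ι κ R : Type*} [Fintype ι] [Fintype κ]
    [CommSemiring R] (M : Matrix ι ι R) (Z : Matrix ι κ R) :
    trace (Zᵀ * M * Z) = ∑ a, ∑ b, M a b * (Z a ⬝ᵥ Z b) := by
  simp only [trace, diag, mul_apply, transpose_apply, dotProduct, sum_mul, mul_sum]
  rw [sum_comm_cycle]
  refine sum_congr rfl fun a _ => ?_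
  rw [sum_comm]
  exact sum_congr rfl fun b _ => sum_congr rfl fun c _ => by ring

theorem mul_trace_eq_of_rows_eq_simplex_vertices {ι κ α : Type*} [Fintype ι] [LinearOrder ι]
    [Fintype κ] [DecidableEq α] {r : ℝ} (hr : r ≠ 1) {v : α → κ → ℝ}
    (hunit : ∀ i, v i ⬝ᵥ v i = 1) (hinner : ∀ i j, i ≠ j → v i ⬝ᵥ v j = -1 / (r - 1))
    {M : Matrix ι ι ℝ} (hM : M.IsSymm) (hdiag : ∀ i, M i i = 0) {σ : ι → α}
    {Z : Matrix ι κ ℝ} (hZ : ∀ i, Z i = v (σ i)) :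
    (r - 1) * trace (Zᵀ * M * Z) = 2 * r * sameLabelPairSum M σ - ∑ a, ∑ b, M a b := by
  have hr' : r - 1 ≠ 0 := sub_ne_zero.mpr hr
  have hterm : ∀ a b, (r - 1) * (M a b * (Z a ⬝ᵥ Z b))
      = r * (if σ a = σ b then M a b else 0) - M a b := by
    intro a b
    rw [hZ, hZ]
    by_cases h : σ a = σ b
    · simp only [h, hunit, if_true]
      ring
    · simp only [hinner _ _ h, h, if_false]
      field_simp
      ring
  rw [trace_transpose_mul_mul_eq_sum, mul_comm 2 r, mul_assoc,
    ← sum_sum_ite_eq_two_mul_sameLabelPairSum hM hdiag, mul_sum, mul_sum, ← sum_sub_distrib]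
  refine sum_congr rfl fun a _ => ?_
  rw [mul_sum, mul_sum, ← sum_sub_distrib]
  exact sum_congr rfl fun b _ => hterm a b

section Likelihood

variable {n r : ℕ} {p q : ℝ} {G : Fin n → Fin n → Prop} [DecidableRel G]

theorem SBMlikelihood_pos (hp0 : 0 < p) (hp1 : p < 1) (hq0 : 0 < q) (hq1 : q < 1)
    (σ : Fin n → Fin r) : 0 < SBMlikelihood n r p q G σ :=
  prod_pos fun _ _ => prod_pos fun _ _ => by split_ifs <;> linarith

theorem SBMlikelihood_eq_mul_exp (hp0 : 0 < p) (hp1 : p < 1) (hq0 : 0 < q) (hq1 : q < 1)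
    {M : Matrix (Fin n) (Fin n) ℝ}
    (hM : ∀ i j, i < j →
      M i j = if G i j then Real.log (p / q) else Real.log ((1 - p) / (1 - q)))
    (σ : Fin n → Fin r) :
    SBMlikelihood n r p q G σ = SBMlikelihood n r q q G σ * Real.exp (sameLabelPairSum M σ) := by
  have h1q : 1 - q ≠ 0 := by linarith
  rw [SBMlikelihood, SBMlikelihood, sameLabelPairSum, Real.exp_sum, ← prod_mul_distrib]
  refine prod_congr rfl fun i _ => ?_
  rw [Real.exp_sum, ← prod_mul_distrib]
  refine prod_congr rfl fun j _ => ?_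
  by_cases hij : i < j
  · rw [hM i j hij]
    by_cases hG : G i j <;> by_cases hσ : σ i = σ j <;>
      simp [hij, hG, hσ, Real.exp_log, hq0, hp0, sub_pos, hp1, hq1] <;> field_simp
  · simp [hij]

theorem SBMlikelihood_div_SBMlikelihood (hp0 : 0 < p) (hp1 : p < 1) (hq0 : 0 < q) (hq1 : q < 1)
    {M : Matrix (Fin n) (Fin n) ℝ}
    (hM : ∀ i j, i < j →
      M i j = if G i j then Real.log (p / q) else Real.log ((1 - p) / (1 - q)))
    (σ τ : Fin n → Fin r) :
    SBMlikelihood n r p q G σ / SBMlikelihood n r p q G τ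
      = Real.exp (sameLabelPairSum M σ - sameLabelPairSum M τ) := by
  have hnull : SBMlikelihood n r q q G τ = SBMlikelihood n r q q G σ := by
    simp only [SBMlikelihood, ite_self]
  rw [SBMlikelihood_eq_mul_exp hp0 hp1 hq0 hq1 hM, SBMlikelihood_eq_mul_exp hp0 hp1 hq0 hq1 hM,
    hnull, mul_div_mul_left _ _ (SBMlikelihood_pos hq0 hq1 hq0 hq1 σ).ne', Real.exp_sub]

theorem condPosterior_div_condPosterior {m k : ℕ} {G : Fin (m + k) → Fin (m + k) → Prop}
    [DecidableRel G] (hp0 : 0 < p) (hp1 : p < 1) (hq0 : 0 < q) (hq1 : q < 1)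
    (σL : Fin k → Fin r) (σU τU : Fin m → Fin r) :
    condPosterior m k r p q G σL σU / condPosterior m k r p q G σL τU
      = SBMlikelihood (m + k) r p q G (Fin.append σU σL)
        / SBMlikelihood (m + k) r p q G (Fin.append τU σL) :=
  div_div_div_cancel_right₀
    (sum_pos (fun _ _ => SBMlikelihood_pos hp0 hp1 hq0 hq1 _) ⟨σU, mem_univ _⟩).ne' _ _

end Likelihood

theorem semi_supervised_posterior_ratio_general (m k r d : ℕ) (hr : 2 ≤ r) (p q : ℝ)
    (hq : 0 < q) (hqp : q < p) (hp : p < 1)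
    (v : Fin r → Fin d → ℝ)
    (hunit : ∀ i, dotProduct (v i) (v i) = 1)
    (hinner : ∀ i j, i ≠ j → dotProduct (v i) (v j) = -1 / ((r : ℝ) - 1))
    (G : Fin (m + k) → Fin (m + k) → Prop) [DecidableRel G]
    (hsymm : Symmetric G)
    (M : Matrix (Fin (m + k)) (Fin (m + k)) ℝ)
    (hM : ∀ i j, M i j = if i = j then 0 else
      if G i j then Real.log (p / q) else Real.log ((1 - p) / (1 - q)))
    (σL : Fin k → Fin r) (σXU σYU : Fin m → Fin r)
    (X Y : Matrix (Fin (m + k)) (Fin d) ℝ)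
    (hX : ∀ i, X i = v (Fin.append σXU σL i))
    (hY : ∀ i, Y i = v (Fin.append σYU σL i)) :
    condPosterior m k r p q G σL σXU / condPosterior m k r p q G σL σYU
      = Real.exp ((((r : ℝ) - 1) / (2 * r)) *
          (Matrix.trace (Xᵀ * M * X) - Matrix.trace (Yᵀ * M * Y))) := by
  have hp0 : 0 < p := hq.trans hqp
  have hq1 : q < 1 := hqp.trans hp
  have hr0 : (r : ℝ) ≠ 0 := by norm_cast; omega
  have hr1 : (r : ℝ) ≠ 1 := by norm_cast; omega
  have hMsymm : M.IsSymm := IsSymm.ext fun i j => by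
    simp only [hM, eq_comm (a := j), show G j i ↔ G i j from ⟨@hsymm _ _, @hsymm _ _⟩]
  have hMdiag : ∀ i, M i i = 0 := fun i => by simp [hM]
  have hMoff : ∀ i j, i < j → M i j = if G i j then Real.log (p / q)
      else Real.log ((1 - p) / (1 - q)) := fun i j hij => by rw [hM, if_neg hij.ne]
  rw [condPosterior_div_condPosterior hp0 hp hq hq1,
    SBMlikelihood_div_SBMlikelihood hp0 hp hq hq1 hMoff]
  have hTX := mul_trace_eq_of_rows_eq_simplex_vertices hr1 hunit hinner hMsymm hMdiag hX
  have hTY := mul_trace_eq_of_rows_eq_simplex_vertices hr1 hunit hinner hMsymm hMdiag hY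
  congr 1
  field_simp
  linarith

/-- Corollary 1 (semi-supervised likelihood): the ratio of conditional posteriors of two
labelings of the unsupervised nodes equals
exp(((r-1)/(2r))(Tr([X_U;X_L]ᵀ M [X_U;X_L]) − Tr([Y_U;X_L]ᵀ M [Y_U;X_L]))). -/
theorem semi_supervised_posterior_ratio (m k r d : ℕ) (hr : 2 ≤ r) (p q : ℝ)
    (hq : 0 < q) (hqp : q < p) (hp : p < 1)
    (v : Fin r → Fin d → ℝ)
    (hunit : ∀ i, dotProduct (v i) (v i) = 1)
    (hinner : ∀ i j, i ≠ j → dotProduct (v i) (v j) = -1 / ((r : ℝ) - 1))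
    (G : Fin (m + k) → Fin (m + k) → Prop) [DecidableRel G]
    (hsymm : Symmetric G) (hirr : Irreflexive G)
    (M : Matrix (Fin (m + k)) (Fin (m + k)) ℝ)
    (hM : ∀ i j, M i j = if i = j then 0 else
      if G i j then Real.log (p / q) else Real.log ((1 - p) / (1 - q)))
    (σL : Fin k → Fin r) (σXU σYU : Fin m → Fin r)
    (X Y : Matrix (Fin (m + k)) (Fin d) ℝ)
    (hX : ∀ i, X i = v (Fin.append σXU σL i))
    (hY : ∀ i, Y i = v (Fin.append σYU σL i)) :
    condPosterior m k r p q G σL σXU / condPosterior m k r p q G σL σYU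
      = Real.exp ((((r : ℝ) - 1) / (2 * r)) *
          (Matrix.trace (Xᵀ * M * X) - Matrix.trace (Yᵀ * M * Y))) :=
  semi_supervised_posterior_ratio_general m k r d hr p q hq hqp hp v hunit hinner G hsymm M hM σL
    σXU σYU X Y hX hY
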